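/- For every natural number j ≥ 1, the series ∑_{r=1}^∞ arctan( F_j²·L_j·L_{4jr} / (F_{4jr}² − F_{2j}² + F_j²) ) converges and its sum equals arctan( 1 / L_j ). -/

import Mathlib

/-!
With `g r = arctan (F_j / F_{4jr+2j})`, the `r`-th term equals `g r - g (r + 1)`: by the
subtraction formula for `arctan`, this reduces to Catalan's identity
`F_m F_{m+4j} = F_{m+2j}² - F_{2j}²` and to `F_{m+4j} - F_m = F_{2j} L_{m+2j}` for even `m`,
together with `F_{2j} = F_j L_j`. The sequence `g` decreases to `0`, so the series telescopes to
`g 0 = arctan (F_j / F_{2j}) = arctan (1 / L_j)`.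
-/

def lucas : ℕ → ℕ
  | 0 => 2
  | 1 => 1
  | n + 2 => lucas (n + 1) + lucas n

open Real Filter Topology Nat

theorem Real.arctan_sub_arctan {x y : ℝ} (h : -1 < x * y) :
    arctan x - arctan y = arctan ((x - y) / (1 + x * y)) := by
  rw [sub_eq_add_neg, ← arctan_neg, arctan_add (by linarith), mul_neg, sub_neg_eq_add,
    ← sub_eq_add_neg]

theorem Real.arctan_div_sub_arctan_div (a : ℝ) {p q : ℝ} (hpq : 0 < p * q) :
    arctan (a / p) - arctan (a / q) = arctan (a * (q - p) / (p * q + a ^ 2)) := by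
  have hp : p ≠ 0 := by rintro rfl; simp at hpq
  have hq : q ≠ 0 := by rintro rfl; simp at hpq
  have hxy : 0 ≤ a / p * (a / q) := by
    rw [_root_.div_mul_div_comm, ← sq]; positivity
  rw [arctan_sub_arctan (by linarith)]
  congr 1
  field_simp

theorem Antitone.hasSum_sub_succ {g : ℕ → ℝ} {l : ℝ} (hg : Antitone g)
    (hl : Tendsto g atTop (𝓝 l)) : HasSum (fun n ↦ g n - g (n + 1)) (g 0 - l) := by
  rw [hasSum_iff_tendsto_nat_of_nonneg fun n ↦ sub_nonneg.2 (hg n.le_succ)]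
  simp only [Finset.sum_range_sub']
  exact tendsto_const_nhds.sub hl

theorem Nat.tendsto_fib_atTop : Tendsto fib atTop atTop :=
  fib_mono.tendsto_atTop_atTop fun b ↦ ⟨b + 1, by have := le_fib_add_one (b + 1); omega⟩

theorem lucas_eq_fib_sub_one_add_fib_add_one :
    ∀ n : ℕ, (lucas n : ℤ) = Int.fib (n - 1) + Int.fib (n + 1)
  | 0 => by simp [lucas]
  | 1 => by simp [lucas]
  | n + 2 => by
    rw [lucas, Nat.cast_add, lucas_eq_fib_sub_one_add_fib_add_one (n + 1),
      lucas_eq_fib_sub_one_add_fib_add_one n]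
    push_cast
    grind [Int.fib_add_two]

theorem Int.fib_one_sub_natCast (k : ℕ) :
    Int.fib (1 - k) = (-1) ^ k * (Nat.fib (k + 1) - Nat.fib k : ℤ) := by
  have h := Int.fib_add_two (-k - 1)
  rw [show -(k : ℤ) - 1 = -((k + 1 : ℕ) : ℤ) by push_cast; ring, Int.fib_neg_natCast,
    show -((k + 1 : ℕ) : ℤ) + 2 = 1 - k by push_cast; ring,
    show -((k + 1 : ℕ) : ℤ) + 1 = -k by push_cast; ring, Int.fib_neg_natCast] at h
  rw [h]
  ring

theorem fib_add_two_mul_sub_neg_one_pow_mul_fib (m k : ℕ) :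
    (fib (m + 2 * k) : ℤ) - (-1) ^ k * fib m = fib k * lucas (m + k) := by
  -- expand `F_{n+k}` and `F_{n-k}`, `n = m + k`, by the addition formula over `ℤ`
  obtain ⟨n, hn⟩ : ∃ n : ℤ, n = m + k := ⟨_, rfl⟩
  have hadd : Int.fib (n + k) = Int.fib (n - 1) * fib k + Int.fib n * fib (k + 1) := by
    rw [Int.fib_add, ← Nat.cast_succ, Int.fib_natCast, Int.fib_natCast]
  have hsub : Int.fib m = Int.fib (n - 1) * Int.fib (-k) + Int.fib n * Int.fib (1 - k) := by
    rw [show (1 : ℤ) - k = -k + 1 by ring, ← Int.fib_add, hn, add_neg_cancel_right]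
  have hrec : Int.fib (n + 1) = Int.fib (n - 1) + Int.fib n := by
    have h := Int.fib_add_two (n - 1)
    rwa [sub_add_cancel, show n - 1 + 2 = n + 1 by ring] at h
  have hm2k : ((m + 2 * k : ℕ) : ℤ) = n + k := by push_cast; lia
  rw [lucas_eq_fib_sub_one_add_fib_add_one, ← Int.fib_natCast, ← Int.fib_natCast, hm2k, hadd,
    hsub, Nat.cast_add, ← hn, hrec, Int.fib_neg_natCast, Int.fib_one_sub_natCast]
  have hsq : ((-1 : ℤ) ^ k) ^ 2 = 1 := by rw [← pow_mul, mul_comm, pow_mul, neg_one_sq, one_pow]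
  linear_combination (Int.fib (n - 1) * fib k - Int.fib n * (fib (k + 1) - fib k : ℤ)) * hsq

theorem fib_two_mul_eq_fib_mul_lucas (n : ℕ) : fib (2 * n) = fib n * lucas n := by
  have h := fib_add_two_mul_sub_neg_one_pow_mul_fib 0 n
  simp only [zero_add, fib_zero, Nat.cast_zero, mul_zero, sub_zero] at h
  exact_mod_cast h

theorem fib_mul_fib_add_two_mul (m k : ℕ) :
    (fib m * fib (m + 2 * k) : ℤ) = fib (m + k) ^ 2 - (-1) ^ m * fib k ^ 2 := by
  have h := Int.fib_add_sq_sub_fib_mul_fib_add_two_mul m k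
  simp only [Int.natAbs_natCast] at h
  push_cast [← Int.fib_natCast]
  linear_combination -h

theorem arctan_fib_div_sub_arctan_fib_div (j : ℕ) {m : ℕ} (hm : Even m) (hm0 : 0 < m) :
    arctan (fib j / fib m) - arctan (fib j / fib (m + 4 * j))
      = arctan ((fib j : ℝ) ^ 2 * lucas j * lucas (m + 2 * j)
          / ((fib (m + 2 * j) : ℝ) ^ 2 - (fib (2 * j) : ℝ) ^ 2 + (fib j : ℝ) ^ 2)) := by
  have hdiff : (fib (m + 4 * j) : ℝ) - fib m = fib j * lucas j * lucas (m + 2 * j) := by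
    have h := fib_add_two_mul_sub_neg_one_pow_mul_fib m (2 * j)
    rw [(even_two_mul j).neg_one_pow, one_mul, fib_two_mul_eq_fib_mul_lucas,
      show m + 2 * (2 * j) = m + 4 * j by ring] at h
    exact_mod_cast h
  have hprod : (fib m * fib (m + 4 * j) : ℝ) = fib (m + 2 * j) ^ 2 - fib (2 * j) ^ 2 := by
    have h := fib_mul_fib_add_two_mul m (2 * j)
    rw [hm.neg_one_pow, one_mul, show m + 2 * (2 * j) = m + 4 * j by ring] at h
    exact_mod_cast h
  have hpos : (0 : ℝ) < fib m * fib (m + 4 * j) := by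
    have : 0 < fib m := fib_pos.2 hm0
    have : 0 < fib (m + 4 * j) := fib_pos.2 (by omega)
    positivity
  rw [arctan_div_sub_arctan_div _ hpos, hdiff, hprod]
  congr 1
  ring

theorem stmt5 (j : ℕ) (hj : 1 ≤ j) :
    HasSum (fun r : ℕ =>
        Real.arctan ((Nat.fib j : ℝ) ^ 2 * (lucas j : ℝ) * (lucas (4 * j * (1 + r)) : ℝ) /
          ((Nat.fib (4 * j * (1 + r)) : ℝ) ^ 2 - (Nat.fib (2 * j) : ℝ) ^ 2
            + (Nat.fib j : ℝ) ^ 2)))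
      (Real.arctan (1 / (lucas j : ℝ))) := by
  set g : ℕ → ℝ := fun r ↦ arctan (fib j / fib (4 * j * r + 2 * j))
  have hsummand (r : ℕ) : g r - g (r + 1) = arctan ((fib j : ℝ) ^ 2 * lucas j
      * lucas (4 * j * (1 + r)) / ((fib (4 * j * (1 + r)) : ℝ) ^ 2 - (fib (2 * j) : ℝ) ^ 2
        + (fib j : ℝ) ^ 2)) := by
    have h := arctan_fib_div_sub_arctan_fib_div j (m := 4 * j * r + 2 * j)
      ⟨2 * j * r + j, by ring⟩ (by omega)
    rwa [show 4 * j * r + 2 * j + 2 * j = 4 * j * (1 + r) by ring,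
      show 4 * j * r + 2 * j + 4 * j = 4 * j * (r + 1) + 2 * j by ring] at h
  have hindex : StrictMono fun r ↦ 4 * j * r + 2 * j := fun a b hab ↦ by
    dsimp only; gcongr
  have hanti : Antitone g := fun a b hab ↦ arctan_strictMono.monotone <|
    div_le_div_of_nonneg_left (by positivity) (by simp [fib_pos]; omega)
      (by exact_mod_cast fib_mono (hindex.monotone hab))
  have hlim : Tendsto g atTop (𝓝 0) := by
    rw [← arctan_zero]
    exact (continuous_arctan.tendsto 0).comp <| tendsto_const_nhds.div_atTop <|
      tendsto_natCast_atTop_atTop.comp (tendsto_fib_atTop.comp hindex.tendsto_atTop)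
  have hg0 : g 0 = arctan (1 / lucas j) := by
    have : (fib j : ℝ) ≠ 0 := Nat.cast_ne_zero.2 (fib_pos.2 hj).ne'
    simp only [g, mul_zero, zero_add, fib_two_mul_eq_fib_mul_lucas, Nat.cast_mul]
    rw [div_mul_cancel_left₀ this, one_div]
  simpa only [hsummand, hg0, sub_zero] using hanti.hasSum_sub_succ hlim
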